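/- Let ω ∈ (0,1), σ > 0, K > 0, T > 0, and let y : (0,T) → ℝ be a positive function such that y(t) ≤ K (t-s)^{-σ} y(s)^ω for all 0 < s < t < T, and such that y(t) ≤ M t^{-σ} for some constant M > 0 and all t ∈ (0,T). Then for all t ∈ (0,T), y(t) ≤ 2^{σ(1-ω)^{-2}} (K t^{-σ})^{(1-ω)^{-1}}. -/
import Mathlib


/-- Bootstrap (Moser-type iteration) lemma: a positive function on `(0,T)` satisfying
`y t ≤ K (t-s)^{-σ} (y s)^ω` together with an a priori bound `y t ≤ M t^{-σ}`
satisfies an estimate independent of `M`. -/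
theorem stmt_0 (ω σ K T M : ℝ) (hω : ω ∈ Set.Ioo (0:ℝ) 1) (hσ : 0 < σ) (hK : 0 < K)
    (hT : 0 < T) (hM : 0 < M) (y : ℝ → ℝ)
    (hpos : ∀ t ∈ Set.Ioo 0 T, 0 < y t)
    (hrec : ∀ s t : ℝ, 0 < s → s < t → t < T → y t ≤ K * (t - s) ^ (-σ) * (y s) ^ ω)
    (hap : ∀ t ∈ Set.Ioo 0 T, y t ≤ M * t ^ (-σ)) :
    ∀ t ∈ Set.Ioo 0 T, y t ≤ 2 ^ (σ * ((1 - ω)⁻¹) ^ 2) * (K * t ^ (-σ)) ^ (1 - ω)⁻¹ := by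
  obtain ⟨hω0, hω1⟩ := hω
  intro t ht
  obtain ⟨ht0, htT⟩ := ht
  set p : ℝ := Real.log K - σ * Real.log t with hp
  set q : ℝ := σ * Real.log 2 with hq
  -- membership of dyadic points
  have hmem : ∀ n : ℕ, t / 2 ^ n ∈ Set.Ioo (0:ℝ) T := by
    intro n
    constructor
    · positivity
    · calc t / 2 ^ n ≤ t / 1 := by
            apply div_le_div_of_nonneg_left ht0.le one_pos
            exact one_le_pow₀ (by norm_num)
        _ = t := by ring
        _ < T := htT
  set a : ℕ → ℝ := fun n => Real.log (y (t / 2 ^ n)) with ha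
  have hypos : ∀ n : ℕ, 0 < y (t / 2 ^ n) := fun n => hpos _ (hmem n)
  have hlog2 : (0:ℝ) < Real.log 2 := Real.log_pos (by norm_num)
  -- one-step inequality in logarithmic form
  have hstep : ∀ n : ℕ, a n ≤ (p + (n + 1) * q) + ω * a (n + 1) := by
    intro n
    have h1 : (0:ℝ) < t / 2 ^ (n + 1) := by positivity
    have h2 : t / 2 ^ (n + 1) < t / 2 ^ n := by
      apply div_lt_div_of_pos_left ht0 (by positivity)
      exact pow_lt_pow_right₀ (by norm_num) (Nat.lt_succ_self n)
    have h3 := hrec (t / 2 ^ (n + 1)) (t / 2 ^ n) h1 h2 (hmem n).2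
    have hdiff : t / 2 ^ n - t / 2 ^ (n + 1) = t / 2 ^ (n + 1) := by
      rw [pow_succ]
      field_simp
      ring
    rw [hdiff] at h3
    have hRpos : 0 < K * (t / 2 ^ (n + 1)) ^ (-σ) * y (t / 2 ^ (n + 1)) ^ ω := by
      have := hypos (n + 1)
      positivity
    have := Real.log_le_log (hypos n) h3
    calc a n ≤ Real.log (K * (t / 2 ^ (n + 1)) ^ (-σ) * y (t / 2 ^ (n + 1)) ^ ω) := this
      _ = Real.log K + (-σ) * Real.log (t / 2 ^ (n + 1)) + ω * a (n + 1) := by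
          rw [Real.log_mul (by positivity) (Real.rpow_pos_of_pos (hypos (n + 1)) ω).ne',
            Real.log_mul hK.ne' (by positivity), Real.log_rpow h1,
            Real.log_rpow (hypos (n + 1))]
      _ = (p + (n + 1) * q) + ω * a (n + 1) := by
          rw [Real.log_div ht0.ne' (by positivity), Real.log_pow]
          push_cast
          rw [hp, hq]
          ring
  -- iterate
  have hiter : ∀ n : ℕ,
      a 0 ≤ (∑ k ∈ Finset.range n, ω ^ k * (p + (k + 1) * q)) + ω ^ n * a n := by
    intro n
    induction n with
    | zero => simp
    | succ n ih =>
      have hωn : (0:ℝ) < ω ^ n := pow_pos hω0 n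
      have h2 : ω ^ n * a n ≤ ω ^ n * ((p + (n + 1) * q) + ω * a (n + 1)) :=
        mul_le_mul_of_nonneg_left (hstep n) hωn.le
      calc a 0 ≤ (∑ k ∈ Finset.range n, ω ^ k * (p + (k + 1) * q)) + ω ^ n * a n := ih
        _ ≤ (∑ k ∈ Finset.range n, ω ^ k * (p + (k + 1) * q))
            + ω ^ n * ((p + (n + 1) * q) + ω * a (n + 1)) := by linarith
        _ = (∑ k ∈ Finset.range (n + 1), ω ^ k * (p + (k + 1) * q))
            + ω ^ (n + 1) * a (n + 1) := by
          rw [Finset.sum_range_succ]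
          push_cast
          ring
  -- a priori bound on a n
  have hapri : ∀ n : ℕ, a n ≤ (Real.log M - σ * Real.log t) + n * q := by
    intro n
    have h1 := hap _ (hmem n)
    have h2 := Real.log_le_log (hypos n) h1
    calc a n ≤ Real.log (M * (t / 2 ^ n) ^ (-σ)) := h2
      _ = (Real.log M - σ * Real.log t) + n * q := by
        rw [Real.log_mul hM.ne' (by positivity), Real.log_rpow (by positivity),
          Real.log_div ht0.ne' (by positivity), Real.log_pow, hq]
        push_cast
        ring
  set c : ℝ := Real.log M - σ * Real.log t with hc
  have hbound : ∀ n : ℕ,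
      a 0 ≤ (∑ k ∈ Finset.range n, ω ^ k * (p + (k + 1) * q)) + (c * ω ^ n + q * (n * ω ^ n)) := by
    intro n
    have hωn : (0:ℝ) < ω ^ n := pow_pos hω0 n
    have h2 : ω ^ n * a n ≤ ω ^ n * (c + n * q) :=
      mul_le_mul_of_nonneg_left (hapri n) hωn.le
    have := hiter n
    calc a 0 ≤ (∑ k ∈ Finset.range n, ω ^ k * (p + (k + 1) * q)) + ω ^ n * a n := this
      _ ≤ _ := by nlinarith [h2]
  -- sum of the series
  have hnorm : ‖ω‖ < 1 := by rw [Real.norm_eq_abs, abs_of_pos hω0]; exact hω1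
  have hs1 : HasSum (fun k : ℕ => ω ^ k) (1 - ω)⁻¹ := hasSum_geometric_of_lt_one hω0.le hω1
  have hs2 : HasSum (fun k : ℕ => (k : ℝ) * ω ^ k) (ω / (1 - ω) ^ 2) :=
    hasSum_coe_mul_geometric_of_norm_lt_one hnorm
  have hω1' : (1:ℝ) - ω > 0 := by linarith
  have hS : HasSum (fun k : ℕ => ω ^ k * (p + (k + 1) * q))
      (p * (1 - ω)⁻¹ + q * (1 - ω)⁻¹ ^ 2) := by
    have h3 : HasSum (fun k : ℕ => (p + q) * ω ^ k + q * ((k : ℝ) * ω ^ k))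
        ((p + q) * (1 - ω)⁻¹ + q * (ω / (1 - ω) ^ 2)) :=
      (hs1.mul_left (p + q)).add (hs2.mul_left q)
    have heq : (fun k : ℕ => (p + q) * ω ^ k + q * ((k : ℝ) * ω ^ k))
        = fun k : ℕ => ω ^ k * (p + (k + 1) * q) := by
      funext k; ring
    rw [heq] at h3
    convert h3 using 1
    field_simp
    ring
  -- pass to the limit
  have htend : Filter.Tendsto
      (fun n => (∑ k ∈ Finset.range n, ω ^ k * (p + (k + 1) * q)) + (c * ω ^ n + q * (n * ω ^ n)))
      Filter.atTop (nhds (p * (1 - ω)⁻¹ + q * (1 - ω)⁻¹ ^ 2 + (c * 0 + q * 0))) := by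
    apply Filter.Tendsto.add hS.tendsto_sum_nat
    apply Filter.Tendsto.add
    · exact (tendsto_pow_atTop_nhds_zero_of_lt_one hω0.le hω1).const_mul c
    · exact (hs2.summable.tendsto_atTop_zero).const_mul q
  have hlim : a 0 ≤ p * (1 - ω)⁻¹ + q * (1 - ω)⁻¹ ^ 2 := by
    have := ge_of_tendsto htend (Filter.Eventually.of_forall hbound)
    simpa using this
  -- exponentiate
  have hy0 : y (t / 2 ^ 0) = y t := by norm_num
  have hkt : (0:ℝ) < K * t ^ (-σ) := by positivity
  have : y t ≤ Real.exp (p * (1 - ω)⁻¹ + q * (1 - ω)⁻¹ ^ 2) := by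
    have h1 : Real.log (y t) ≤ p * (1 - ω)⁻¹ + q * (1 - ω)⁻¹ ^ 2 := by
      rw [← hy0]; exact hlim
    calc y t = Real.exp (Real.log (y t)) := (Real.exp_log (hpos t ⟨ht0, htT⟩)).symm
      _ ≤ _ := Real.exp_le_exp.mpr h1
  calc y t ≤ Real.exp (p * (1 - ω)⁻¹ + q * (1 - ω)⁻¹ ^ 2) := this
    _ = 2 ^ (σ * ((1 - ω)⁻¹) ^ 2) * (K * t ^ (-σ)) ^ (1 - ω)⁻¹ := by
      rw [Real.rpow_def_of_pos (by norm_num : (0:ℝ) < 2),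
        Real.rpow_def_of_pos hkt, ← Real.exp_add,
        Real.log_mul hK.ne' (by positivity), Real.log_rpow ht0]
      congr 1
      rw [hp, hq]
      ring
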